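/- arXiv:2411.18264 — 7 statements merged into one kernel-verified Lean document; each statement's English description precedes it below -/
import Mathlib

section
/- Consider the n-component Lotka-Volterra system dx_i/dt = x_i(b_i + ∑_j A_{i,j} x_j) with i ≠ k and nonzero scalars α, β. Assume (A_{k,k}−A_{i,k})(A_{k,i}−A_{i,i}) ≠ 0. Then P = α x_i + β x_k is a Darboux polynomial if and only if: (1) A_{i,j} = A_{k,j} for all j ∉ {i,k}, (2) b_i = b_k, and (3) α(A_{k,k}−A_{i,k}) = β(A_{k,i}−A_{i,i}). -/
open MvPolynomial

/-- The Lie derivative of a polynomial `P` along the polynomial vector field `f`. -/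
noncomputable def lieDeriv {n : ℕ} (f : Fin n → MvPolynomial (Fin n) ℝ)
    (P : MvPolynomial (Fin n) ℝ) : MvPolynomial (Fin n) ℝ :=
  ∑ i, f i * pderiv i P

/-- `P` is a Darboux polynomial for the vector field `f`. -/
def IsDarboux {n : ℕ} (f : Fin n → MvPolynomial (Fin n) ℝ)
    (P : MvPolynomial (Fin n) ℝ) : Prop :=
  ∃ Ccof : MvPolynomial (Fin n) ℝ, lieDeriv f P = Ccof * P

/-- The Lotka-Volterra vector field `dx_i/dt = x_i (b_i + ∑_j A_{i,j} x_j)`. -/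
noncomputable def LV {n : ℕ} (A : Matrix (Fin n) (Fin n) ℝ) (b : Fin n → ℝ) :
    Fin n → MvPolynomial (Fin n) ℝ :=
  fun i => X i * (C (b i) + ∑ j, C (A i j) * X j)

/-- Characterization of 2-component linear Darboux polynomials `α x_i + β x_k`
for the Lotka-Volterra system. -/
theorem twoDP_iff {n : ℕ} (A : Matrix (Fin n) (Fin n) ℝ) (b : Fin n → ℝ)
    (i k : Fin n) (hik : i ≠ k) (α β : ℝ) (hα : α ≠ 0) (hβ : β ≠ 0)
    (hnd : (A k k - A i k) * (A k i - A i i) ≠ 0) :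
    IsDarboux (LV A b) (C α * X i + C β * X k) ↔
      ((∀ j, j ≠ i → j ≠ k → A i j = A k j) ∧ b i = b k ∧
        α * (A k k - A i k) = β * (A k i - A i i)) := by
  classical
  set E : Finset (Fin n) := (Finset.univ.erase i).erase k with hE
  have hiE : i ∉ E := by simp [hE]
  have hkE : k ∉ E := by simp [hE]
  have hmemE : ∀ j, j ≠ i → j ≠ k → j ∈ E := by
    intro j h1 h2; simp [hE, h1, h2]
  -- structure of the Lie derivative
  have hlie : lieDeriv (LV A b) (C α * X i + C β * X k)
      = C α * LV A b i + C β * LV A b k := by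
    unfold lieDeriv
    have h : ∀ j, LV A b j * pderiv j (C α * X i + C β * X k)
        = (if i = j then C α * LV A b j else 0) + (if k = j then C β * LV A b j else 0) := by
      intro j
      simp [pderiv_X, Pi.single_apply]
      split_ifs <;> ring
    simp only [h, Finset.sum_add_distrib, Finset.sum_ite_eq, Finset.mem_univ, if_true]
  have hevalLV : ∀ (m : Fin n) (v : Fin n → ℝ),
      eval v (LV A b m) = v m * (b m + ∑ j, A m j * v j) := by
    intro m v; simp [LV]
  have hsplit : ∀ g : Fin n → ℝ, ∑ j, g j = g i + g k + ∑ j ∈ E, g j := by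
    intro g
    rw [← Finset.add_sum_erase _ g (Finset.mem_univ i),
        ← Finset.add_sum_erase _ g (Finset.mem_erase.2 ⟨hik.symm, Finset.mem_univ k⟩)]
    ring
  constructor
  · rintro ⟨Q, hQ⟩
    -- key evaluation identity on the hyperplane P = 0
    have key : ∀ (s : ℝ) (y : Fin n → ℝ),
        α * ((β*s) * (b i + (A i i * (β*s) + A i k * (-(α*s)) + ∑ j ∈ E, A i j * y j)))
        + β * ((-(α*s)) * (b k + (A k i * (β*s) + A k k * (-(α*s)) + ∑ j ∈ E, A k j * y j))) = 0 := by
      intro s y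
      set v : Fin n → ℝ := fun j => if j = i then β*s else if j = k then -(α*s) else y j with hv
      have hvi : v i = β*s := by simp [hv]
      have hvk : v k = -(α*s) := by simp [hv, hik.symm]
      have hvE : ∀ j ∈ E, v j = y j := by
        intro j hj
        have h1 : j ≠ i := (Finset.mem_erase.1 (Finset.mem_erase.1 hj).2).1
        have h2 : j ≠ k := (Finset.mem_erase.1 hj).1
        simp [hv, h1, h2]
      have hP : eval v (C α * X i + C β * X k) = 0 := by
        simp [hvi, hvk]; ring
      have h0 := congrArg (eval v) hQ
      rw [hlie] at h0
      simp only [eval_add, eval_mul, eval_C, hP, mul_zero] at h0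
      rw [hevalLV, hevalLV] at h0
      have hsum : ∀ m : Fin n, ∑ j, A m j * v j
          = A m i * (β*s) + A m k * (-(α*s)) + ∑ j ∈ E, A m j * y j := by
        intro m
        rw [hsplit (fun j => A m j * v j), hvi, hvk]
        congr 1
        exact Finset.sum_congr rfl fun j hj => by rw [hvE j hj]
      rw [hsum, hsum, hvi, hvk] at h0
      linarith [h0]
    have hαβ : α * β ≠ 0 := mul_ne_zero hα hβ
    have r1 := key 1 0
    have r2 := key 2 0
    simp only [Pi.zero_apply, mul_zero, Finset.sum_const_zero] at r1 r2
    have hd : β * (A i i - A k i) - α * (A i k - A k k) = 0 := by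
      have h : α * β * (β * (A i i - A k i) - α * (A i k - A k k)) = 0 := by
        linear_combination (1/2 : ℝ) * r2 - r1
      exact (mul_eq_zero.mp h).resolve_left hαβ
    have hc : b i = b k := by
      have h : α * β * (b i - b k) = 0 := by
        linear_combination r1 - α * β * hd
      have := (mul_eq_zero.mp h).resolve_left hαβ
      linarith
    refine ⟨?_, hc, by linarith⟩
    intro j₀ h1 h2
    have rj := key 1 (fun j => if j = j₀ then 1 else 0)
    have hsj : ∀ m : Fin n, ∑ j ∈ E, A m j * (if j = j₀ then (1:ℝ) else 0) = A m j₀ := by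
      intro m
      rw [Finset.sum_eq_single_of_mem j₀ (hmemE j₀ h1 h2)]
      · simp
      · intro j _ hj; simp [hj]
    rw [hsj, hsj] at rj
    have h : α * β * (A i j₀ - A k j₀) = 0 := by
      linear_combination rj - r1
    have := (mul_eq_zero.mp h).resolve_left hαβ
    linarith
  · rintro ⟨h1, hb, h3⟩
    refine ⟨C (b i) + ∑ j, C (if j = k then A k k else A i j) * X j, ?_⟩
    apply MvPolynomial.funext
    intro v
    rw [hlie]
    simp only [eval_add, eval_mul, eval_C, eval_X, eval_sum]
    rw [hevalLV, hevalLV]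
    set c : Fin n → ℝ := fun j => if j = k then A k k else A i j with hcdef
    have hS : ∀ m : Fin n, ∑ j, A m j * v j
        = A m i * v i + A m k * v k + ∑ j ∈ E, A m j * v j :=
      fun m => hsplit (fun j => A m j * v j)
    have hSc : ∑ j, (if j = k then A k k else A i j) * v j
        = A i i * v i + A k k * v k + ∑ j ∈ E, A i j * v j := by
      rw [hsplit (fun j => (if j = k then A k k else A i j) * v j)]
      simp only [if_neg hik, if_pos rfl]
      congr 1
      refine Finset.sum_congr rfl fun j hj => ?_
      have h2 : j ≠ k := (Finset.mem_erase.1 hj).1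
      simp [h2]
    have hSik : ∑ j ∈ E, A k j * v j = ∑ j ∈ E, A i j * v j := by
      refine Finset.sum_congr rfl fun j hj => ?_
      have hj1 : j ≠ i := (Finset.mem_erase.1 (Finset.mem_erase.1 hj).2).1
      have hj2 : j ≠ k := (Finset.mem_erase.1 hj).1
      rw [h1 j hj1 hj2]
    rw [hS i, hS k, hSik, hSc]
    set S := ∑ j ∈ E, A i j * v j
    linear_combination (-(β * v k)) * hb + (-(v i * v k)) * h3
end

section
/- Let I = {i_1,…,i_m} ⊂ {1,…,n} be a set of m distinct indices and let α_1,…,α_m be nonzero scalars. Then P = α_1 x_{i_1} + ⋯ + α_m x_{i_m} is a Darboux polynomial for the Lotka-Volterra system dx_i/dt = x_i(b_i + ∑_j A_{i,j} x_j) if and only if the following three conditions hold: (C1) there exists b such that b_i = b for all i ∈ I; (C2) A_{i,j} = A_{k,j} for all i,k ∈ I and all j ∉ I; (C3) α_h(A_{i_h,i_j} − A_{i_j,i_j}) = α_j(A_{i_h,i_h} − A_{i_j,i_h}) for all h,j ∈ {1,…,m}. -/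
open MvPolynomial

/-!
Write `P = ∑ₕ αₕ x_{v h}` and `rᵢ = bᵢ + ∑ⱼ Aᵢⱼ xⱼ`, so that the Lie derivative of `P` along
the Lotka-Volterra field is `L P = ∑ₕ αₕ x_{v h} r_{v h}`. Thus `L P = Q P` says
`∑ₕ x_{v h} Dₕ = 0` with `Dₕ = αₕ (r_{v h} - Q)`. In such a relation the coefficient of
`x_{v k}` is `D_k(0)`, and that of `x_{v k} x_j` is `∂ⱼ D_k(0)` plus `∂_{v k} D_l(0)` when
`j = v l`. Since the `αₕ` are nonzero this yields `b_{v h} = Q(0)`, `A_{v h, j} = ∂ⱼ Q(0)` for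
`j` outside the image of `v`, and
`αₕ (A_{v h, v l} - ∂_{v l} Q(0)) + α_l (A_{v l, v h} - ∂_{v h} Q(0)) = 0`, whose diagonal case
gives `∂_{v h} Q(0) = A_{v h, v h}`; these are (C1)–(C3).

Conversely, take `Q = b₀ + ∑ⱼ cⱼ xⱼ`, where `b₀` is the common value of the `b_{v h}`,
`c_{v l} = A_{v l, v l}`, and otherwise `cⱼ` is the common value of column `j` of `A` on the
rows `v h`. Then `L P - Q P` is the quadratic form
`∑_{h,l} αₕ (A_{v h, v l} - A_{v l, v l}) x_{v h} x_{v l}`, whose coefficient matrix is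
antisymmetric by (C3), so it vanishes.
-/

theorem Finset.sum_sum_eq_zero_of_antisymm {ι M : Type*} [AddCommGroup M] [IsAddTorsionFree M]
    (s : Finset ι) (f : ι → ι → M) (hf : ∀ i j, f j i = -f i j) :
    ∑ i ∈ s, ∑ j ∈ s, f i j = 0 := by
  rw [← two_nsmul_eq_zero, two_nsmul]
  nth_rw 2 [Finset.sum_comm]
  rw [← Finset.sum_add_distrib]
  refine Finset.sum_eq_zero fun i _ => ?_
  rw [← Finset.sum_add_distrib]
  exact Finset.sum_eq_zero fun j _ => by rw [hf, neg_add_cancel]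

namespace MvPolynomial

variable {R σ ι : Type*} [CommRing R]

section Derivatives

variable [DecidableEq σ]

theorem constantCoeff_pderiv_X_mul (i k : σ) (D : MvPolynomial σ R) :
    constantCoeff (pderiv i (X k * D)) = if k = i then constantCoeff D else 0 := by
  simp [pderiv_X, Pi.single_apply, apply_ite constantCoeff]

theorem constantCoeff_pderiv_pderiv_X_mul (i j k : σ) (D : MvPolynomial σ R) :
    constantCoeff (pderiv j (pderiv i (X k * D))) =
      (if k = i then constantCoeff (pderiv j D) else 0) +
        (if k = j then constantCoeff (pderiv i D) else 0) := by
  simp only [Derivation.leibniz, pderiv_X, Pi.single_apply, map_add, smul_eq_mul, map_mul,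
    constantCoeff_X, zero_mul]
  split_ifs <;> simp [add_comm]

section Sum

variable [Fintype ι] {v : ι → σ} {D : ι → MvPolynomial σ R}

theorem constantCoeff_pderiv_pderiv_sum_X_mul (hv : Function.Injective v) (k : ι) (j : σ) :
    constantCoeff (pderiv j (pderiv (v k) (∑ h, X (v h) * D h))) =
      constantCoeff (pderiv j (D k)) +
        ∑ h, if v h = j then constantCoeff (pderiv (v k) (D h)) else 0 := by
  classical
  simp only [map_sum, constantCoeff_pderiv_pderiv_X_mul, Finset.sum_add_distrib, hv.eq_iff,
    Finset.sum_ite_eq', Finset.mem_univ, if_true]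

variable (hv : Function.Injective v) (hD : ∑ h, X (v h) * D h = 0)
include hv hD

theorem constantCoeff_eq_zero_of_sum_X_mul_eq_zero (k : ι) : constantCoeff (D k) = 0 := by
  classical
  have := congrArg (fun Q => constantCoeff (pderiv (v k) Q)) hD
  simpa only [map_sum, constantCoeff_pderiv_X_mul, hv.eq_iff, Finset.sum_ite_eq',
    Finset.mem_univ, if_true, map_zero] using this

theorem constantCoeff_pderiv_eq_zero_of_sum_X_mul_eq_zero (k : ι) {j : σ}
    (hj : ∀ l, v l ≠ j) : constantCoeff (pderiv j (D k)) = 0 := by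
  have := constantCoeff_pderiv_pderiv_sum_X_mul (D := D) hv k j
  simpa [hD, hj] using this.symm

theorem constantCoeff_pderiv_add_eq_zero_of_sum_X_mul_eq_zero (k l : ι) :
    constantCoeff (pderiv (v l) (D k)) + constantCoeff (pderiv (v k) (D l)) = 0 := by
  classical
  have := constantCoeff_pderiv_pderiv_sum_X_mul (D := D) hv k (v l)
  simpa [hD, hv.eq_iff] using this.symm

end Sum

end Derivatives

section Affine

variable [Fintype σ]

noncomputable def affine (c : R) (a : σ → R) : MvPolynomial σ R :=
  C c + ∑ j, C (a j) * X j

theorem totalDegree_affine_le (c : R) (a : σ → R) : (affine c a).totalDegree ≤ 1 := by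
  refine (totalDegree_add _ _).trans (max_le (by simp) ?_)
  refine (totalDegree_finsetSum _ _).trans (Finset.sup_le fun j _ => ?_)
  rw [C_mul_X_eq_monomial]
  exact (totalDegree_monomial_le _ _).trans (by simp)

@[simp]
theorem constantCoeff_affine (c : R) (a : σ → R) : constantCoeff (affine c a) = c := by
  simp [affine]

@[simp]
theorem pderiv_affine (c : R) (a : σ → R) (i : σ) : pderiv i (affine c a) = C (a i) := by
  classical
  simp [affine, pderiv_X, Pi.single_apply]

theorem affine_sub_affine (c c' : R) (a a' : σ → R) :
    affine c a - affine c' a' = affine (c - c') (a - a') := by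
  simp only [affine, Pi.sub_apply, map_sub, sub_mul, Finset.sum_sub_distrib]
  ring

end Affine

end MvPolynomial

open MvPolynomial

variable {n : ℕ} {ι : Type*} [Fintype ι]

theorem lieDeriv_sum_C_mul_X (f : Fin n → MvPolynomial (Fin n) ℝ) (α : ι → ℝ) (v : ι → Fin n) :
    lieDeriv f (∑ h, C (α h) * X (v h)) = ∑ h, C (α h) * f (v h) := by
  classical
  simp only [lieDeriv, map_sum, pderiv_C_mul, pderiv_X, Finset.mul_sum]
  rw [Finset.sum_comm]
  refine Finset.sum_congr rfl fun h _ => ?_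
  simp [Pi.single_apply, mul_comm]

namespace LV

theorem lieDeriv_sub_mul (A : Matrix (Fin n) (Fin n) ℝ) (b : Fin n → ℝ) (α : ι → ℝ)
    (v : ι → Fin n) (Q : MvPolynomial (Fin n) ℝ) :
    lieDeriv (LV A b) (∑ h, C (α h) * X (v h)) - Q * ∑ h, C (α h) * X (v h) =
      ∑ h, X (v h) * (C (α h) * (affine (b (v h)) (A (v h)) - Q)) := by
  rw [lieDeriv_sum_C_mul_X, Finset.mul_sum, ← Finset.sum_sub_distrib]
  refine Finset.sum_congr rfl fun h _ => ?_
  simp only [LV, affine]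
  ring

section Necessity

variable {A : Matrix (Fin n) (Fin n) ℝ} {b : Fin n → ℝ} {α : ι → ℝ} {v : ι → Fin n}
  {Q : MvPolynomial (Fin n) ℝ} (hv : Function.Injective v)
  (hE : lieDeriv (LV A b) (∑ h, C (α h) * X (v h)) = Q * ∑ h, C (α h) * X (v h))

include hE in
theorem sum_X_mul_eq_zero_of_lieDeriv_eq :
    ∑ h, X (v h) * (C (α h) * (affine (b (v h)) (A (v h)) - Q)) = 0 := by
  rw [← lieDeriv_sub_mul, hE, sub_self]

include hv hE

theorem interaction_add_eq_zero_of_lieDeriv_eq (h l : ι) :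
    α h * (A (v h) (v l) - constantCoeff (pderiv (v l) Q)) +
      α l * (A (v l) (v h) - constantCoeff (pderiv (v h) Q)) = 0 := by
  simpa [pderiv_C_mul] using constantCoeff_pderiv_add_eq_zero_of_sum_X_mul_eq_zero hv
    (sum_X_mul_eq_zero_of_lieDeriv_eq hE) h l

variable (hα : ∀ h, α h ≠ 0)
include hα

theorem growth_eq_of_lieDeriv_eq (h : ι) : b (v h) = constantCoeff Q := by
  have hD := constantCoeff_eq_zero_of_sum_X_mul_eq_zero hv
    (sum_X_mul_eq_zero_of_lieDeriv_eq hE) h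
  simpa [hα h, sub_eq_zero] using hD

theorem interaction_eq_of_lieDeriv_eq (h : ι) {j : Fin n} (hj : ∀ l, v l ≠ j) :
    A (v h) j = constantCoeff (pderiv j Q) := by
  have hD := constantCoeff_pderiv_eq_zero_of_sum_X_mul_eq_zero hv
    (sum_X_mul_eq_zero_of_lieDeriv_eq hE) h hj
  simpa [hα h, sub_eq_zero] using hD

theorem interaction_antisymm_of_lieDeriv_eq (h l : ι) :
    α h * (A (v h) (v l) - A (v l) (v l)) = α l * (A (v h) (v h) - A (v l) (v h)) := by
  have hdiag (k : ι) : constantCoeff (pderiv (v k) Q) = A (v k) (v k) := by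
    have hk : α k * (A (v k) (v k) - constantCoeff (pderiv (v k) Q)) = 0 := by
      linear_combination interaction_add_eq_zero_of_lieDeriv_eq hv hE k k / 2
    exact (sub_eq_zero.mp ((mul_eq_zero.mp hk).resolve_left (hα k))).symm
  linear_combination interaction_add_eq_zero_of_lieDeriv_eq hv hE h l +
    α h * hdiag l + α l * hdiag h

end Necessity

section Sufficiency

variable {A : Matrix (Fin n) (Fin n) ℝ} {b : Fin n → ℝ} {α : ι → ℝ} {v : ι → Fin n} {b0 : ℝ}
  (hv : Function.Injective v) (hb : ∀ h, b (v h) = b0)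
  (hC3 : ∀ h l, α h * (A (v h) (v l) - A (v l) (v l)) = α l * (A (v h) (v h) - A (v l) (v h)))
include hv hb hC3

theorem lieDeriv_eq_affine_mul {c : Fin n → ℝ}
    (hc_out : ∀ h j, (∀ l, v l ≠ j) → A (v h) j = c j) (hc_in : ∀ l, c (v l) = A (v l) (v l)) :
    lieDeriv (LV A b) (∑ h, C (α h) * X (v h)) = affine b0 c * ∑ h, C (α h) * X (v h) := by
  rw [← sub_eq_zero, lieDeriv_sub_mul]
  have hrow (h : ι) : affine (b (v h)) (A (v h)) - affine b0 c =
      ∑ l, C (A (v h) (v l) - A (v l) (v l)) * X (v l) := by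
    rw [affine_sub_affine, hb h, sub_self, affine, C_0, zero_add]
    refine (Fintype.sum_of_injective v hv _ _ (fun j hj => ?_) (fun l => ?_)).symm
    · rw [Pi.sub_apply, hc_out h j (fun l hl => hj ⟨l, hl⟩), sub_self, C_0, zero_mul]
    · rw [Pi.sub_apply, hc_in]
  simp only [hrow, Finset.mul_sum]
  refine Finset.sum_sum_eq_zero_of_antisymm _ _ fun h l => ?_
  have hcoeff : (C (α l) * C (A (v l) (v h) - A (v h) (v h)) : MvPolynomial (Fin n) ℝ) =
      -(C (α h) * C (A (v h) (v l) - A (v l) (v l))) := by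
    rw [← map_mul, ← map_mul, ← map_neg]
    congr 1
    linear_combination hC3 h l
  linear_combination X (v h) * X (v l) * hcoeff

theorem exists_affine_cofactor (hC2 : ∀ h k j, (∀ l, v l ≠ j) → A (v h) j = A (v k) j) :
    ∃ Q : MvPolynomial (Fin n) ℝ, Q.totalDegree ≤ 1 ∧
      lieDeriv (LV A b) (∑ h, C (α h) * X (v h)) = Q * ∑ h, C (α h) * X (v h) := by
  classical
  rcases isEmpty_or_nonempty ι with hι | ⟨⟨h0⟩⟩
  · exact ⟨0, by simp, by simp [lieDeriv]⟩
  · let c j := if j ∈ Set.range v then A j j else A (v h0) j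
    refine ⟨affine b0 c, totalDegree_affine_le _ _,
      lieDeriv_eq_affine_mul hv hb hC3 (fun h j hj => ?_) (fun l => by simp [c])⟩
    simp [c, hj, hC2 h h0 j hj]

end Sufficiency

end LV

/-- Lemma 1: `P = α_1 x_{i_1} + ⋯ + α_m x_{i_m}` (distinct indices, nonzero
coefficients) is a Darboux polynomial (with affine cofactor) for the
Lotka-Volterra system iff conditions (C1), (C2) and (C3) hold. -/
theorem mDP_iff {n m : ℕ} (A : Matrix (Fin n) (Fin n) ℝ) (b : Fin n → ℝ)
    (v : Fin m → Fin n) (hv : Function.Injective v)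
    (α : Fin m → ℝ) (hα : ∀ j, α j ≠ 0) :
    (∃ Ccof : MvPolynomial (Fin n) ℝ, Ccof.totalDegree ≤ 1 ∧
        lieDeriv (LV A b) (∑ h, C (α h) * X (v h)) =
          Ccof * (∑ h, C (α h) * X (v h))) ↔
      ((∃ b0 : ℝ, ∀ h : Fin m, b (v h) = b0) ∧
        (∀ h k : Fin m, ∀ j : Fin n, (∀ l : Fin m, v l ≠ j) →
          A (v h) j = A (v k) j) ∧
        (∀ h j : Fin m,
          α h * (A (v h) (v j) - A (v j) (v j)) =
            α j * (A (v h) (v h) - A (v j) (v h)))) := by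
  constructor
  · rintro ⟨Q, -, hE⟩
    refine ⟨⟨constantCoeff Q, LV.growth_eq_of_lieDeriv_eq hv hE hα⟩, fun h k j hj => ?_,
      LV.interaction_antisymm_of_lieDeriv_eq hv hE hα⟩
    rw [LV.interaction_eq_of_lieDeriv_eq hv hE hα h hj,
      LV.interaction_eq_of_lieDeriv_eq hv hE hα k hj]
  · rintro ⟨⟨b0, hb⟩, hC2, hC3⟩
    exact LV.exists_affine_cofactor hv hb hC3 hC2
end

section
/- Suppose P = α_1 x_{i_1} + ⋯ + α_m x_{i_m} (with all α_j ≠ 0 and the i_j distinct) is a Darboux polynomial with cofactor C = β_0 + ∑_i β_i x_i for the Lotka-Volterra system dx_i/dt = x_i(b_i + ∑_j A_{i,j} x_j). Then the cofactor coefficients are determined: β_j = A_{j,j} for j ∈ I = {i_1,…,i_m}, β_j = A_{i_1,j} for j ∉ I, and β_0 equals the common value b_i for i ∈ I. -/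
open MvPolynomial

private lemma key_eval {n m : ℕ} (A : Matrix (Fin n) (Fin n) ℝ)
    (b : Fin n → ℝ) (v : Fin (m + 1) → Fin n) (α : Fin (m + 1) → ℝ) (β0 : ℝ) (β : Fin n → ℝ)
    (hDP : lieDeriv (LV A b) (∑ h, C (α h) * X (v h)) =
      (C β0 + ∑ i, C (β i) * X i) * (∑ h, C (α h) * X (v h)))
    (x : Fin n → ℝ) :
    ∑ h, α h * (x (v h) * (b (v h) + ∑ j, A (v h) j * x j))
    = (β0 + ∑ i, β i * x i) * ∑ h, α h * x (v h) := by
  have := congrArg (eval x) hDP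
  rw [show eval x (lieDeriv (LV A b) (∑ h, C (α h) * X (v h)))
      = ∑ h, α h * (x (v h) * (b (v h) + ∑ j, A (v h) j * x j)) from ?_] at this
  · rw [this]; simp [Finset.mul_sum]
  · unfold lieDeriv LV
    simp [map_sum, pderiv_C_mul, pderiv_X, Pi.single_apply, mul_ite, Finset.mul_sum,
      Finset.sum_ite_eq, Finset.sum_ite_eq']
    rw [Finset.sum_comm]
    simp only [apply_ite (eval x), map_zero, Finset.sum_ite_eq]
    simp [Finset.mul_sum]
    exact Finset.sum_congr rfl fun h _ => by ring

/-- If `P = ∑ α_h x_{i_h}` (nonzero coefficients, distinct indices) is a Darboux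
polynomial of the LV system with affine cofactor `β_0 + ∑_i β_i x_i`, then the
cofactor coefficients are determined: `β_j = A_{j,j}` for `j ∈ I`,
`β_j = A_{i_1,j}` for `j ∉ I`, and `β_0` is the common value of `b_i`, `i ∈ I`. -/
theorem cofactor_determined {n m : ℕ} (A : Matrix (Fin n) (Fin n) ℝ)
    (b : Fin n → ℝ) (v : Fin (m + 1) → Fin n) (hv : Function.Injective v)
    (α : Fin (m + 1) → ℝ) (hα : ∀ j, α j ≠ 0) (β0 : ℝ) (β : Fin n → ℝ)
    (hDP : lieDeriv (LV A b) (∑ h, C (α h) * X (v h)) =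
      (C β0 + ∑ i, C (β i) * X i) * (∑ h, C (α h) * X (v h))) :
    (∀ j : Fin n, (∃ h, v h = j) → β j = A j j) ∧
    (∀ j : Fin n, (∀ h, v h ≠ j) → β j = A (v 0) j) ∧
    (∀ h, b (v h) = β0) := by
  have key := key_eval A b v α β0 β hDP
  have main : ∀ h : Fin (m+1), β (v h) = A (v h) (v h) ∧ b (v h) = β0 := by
    intro h
    have H : ∀ t : ℝ, α h * (t * (b (v h) + A (v h) (v h) * t))
        = (β0 + β (v h) * t) * (α h * t) := by
      intro t
      have := key (fun i => if i = v h then t else 0)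
      simpa [hv.eq_iff, mul_ite, Finset.sum_ite_eq, Finset.sum_ite_eq'] using this
    have e1 := H 1
    have e2 := H (-1)
    ring_nf at e1 e2
    constructor
    · exact mul_left_cancel₀ (hα h) (by linarith)
    · exact mul_left_cancel₀ (hα h) (by linarith)
  refine ⟨fun j ⟨h, hh⟩ => hh ▸ (main h).1, fun j hj => ?_, fun h => (main h).2⟩
  have H : ∀ t : ℝ, α 0 * (1 * (b (v 0) + (A (v 0) (v 0) + A (v 0) j * t)))
      = (β0 + (β (v 0) + β j * t)) * (α 0 * 1) := by
    intro t
    have := key (fun i => (if i = v 0 then 1 else 0) + (if i = j then t else 0))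
    simpa [hv.eq_iff, hj, mul_ite, mul_add, add_mul, Finset.sum_add_distrib,
      Finset.sum_ite_eq, Finset.sum_ite_eq'] using this
  have e1 := H 1
  have e2 := H (-1)
  ring_nf at e1 e2
  exact mul_left_cancel₀ (hα 0) (by linarith)
end

section
/- Consider the 3-component homogeneous Lotka-Volterra system with matrix A = [[a1,a2,a3],[a4,a5,a6],[a7,a8,a9]] satisfying A_{1,2}=A_{3,2}, A_{2,1}=A_{3,1}, A_{2,3}=A_{1,3} (i.e. a_8=a_2, a_7=a_4, a_6=a_3). If additionally A admits three 2-DPs corresponding to all three edges {1,2},{1,3},{2,3} and a 3-DP with nonzero coefficients, then (A_{1,2}−A_{2,2})(A_{1,1}−A_{2,1})(A_{1,3}−A_{3,3}) = 0; hence the generic nondegeneracy conditions for the 3-DP fail. -/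
open MvPolynomial

/-- For a 3-component homogeneous LV system whose matrix satisfies the
symmetrized off-diagonal conditions `a_8 = a_2`, `a_7 = a_4`, `a_6 = a_3`,
if it admits 2-DPs for all three edges and a 3-DP with nonzero coefficients,
then `(a_2 - a_5)(a_1 - a_4)(a_3 - a_9) = 0`, i.e. the generic nondegeneracy
conditions for the 3-DP fail. -/
theorem sym_three_twoDPs_degenerate (A : Matrix (Fin 3) (Fin 3) ℝ)
    (h12 : A 0 1 = A 2 1) (h21 : A 1 0 = A 2 0) (h23 : A 1 2 = A 0 2)
    (hDP12 : ∃ α β : ℝ, α ≠ 0 ∧ β ≠ 0 ∧ IsDarboux (LV A 0) (C α * X 0 + C β * X 1))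
    (hDP13 : ∃ α β : ℝ, α ≠ 0 ∧ β ≠ 0 ∧ IsDarboux (LV A 0) (C α * X 0 + C β * X 2))
    (hDP23 : ∃ α β : ℝ, α ≠ 0 ∧ β ≠ 0 ∧ IsDarboux (LV A 0) (C α * X 1 + C β * X 2))
    (hDP123 : ∃ α : Fin 3 → ℝ, (∀ i, α i ≠ 0) ∧
      IsDarboux (LV A 0) (∑ i, C (α i) * X i)) :
    (A 0 1 - A 1 1) * (A 0 0 - A 1 0) * (A 0 2 - A 2 2) = 0 := by
  obtain ⟨α, hα, Ccof, heq⟩ := hDP123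
  have key : ∀ x : Fin 3 → ℝ, α 0 * x 0 + α 1 * x 1 + α 2 * x 2 = 0 →
      α 0 * (x 0 * (A 0 0 * x 0 + A 0 1 * x 1 + A 0 2 * x 2))
    + α 1 * (x 1 * (A 1 0 * x 0 + A 1 1 * x 1 + A 1 2 * x 2))
    + α 2 * (x 2 * (A 2 0 * x 0 + A 2 1 * x 1 + A 2 2 * x 2)) = 0 := by
    intro x hx
    have h := congrArg (eval x) heq
    simp [lieDeriv, LV, Fin.sum_univ_three, pderiv_X, Pi.single_apply] at h
    rw [hx, mul_zero] at h
    linear_combination h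
  have E1 := key ![α 1, -α 0, 0] (by simp; ring)
  have E2 := key ![α 2, 0, -α 0] (by simp; ring)
  have E3 := key ![0, α 2, -α 1] (by simp; ring)
  simp [Matrix.cons_val_zero, Matrix.cons_val_one] at E1 E2 E3
  have fac : ∀ a b c : ℝ, a ≠ 0 → b ≠ 0 → (a * b) * c = 0 → c = 0 := by
    intro a b c ha hb h
    rcases mul_eq_zero.mp h with h | h
    · exact absurd h (mul_ne_zero ha hb)
    · exact h
  have e1 : α 1 * (A 0 0 - A 1 0) + α 0 * (A 1 1 - A 0 1) = 0 :=
    fac _ _ _ (hα 0) (hα 1) (by linear_combination E1)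
  have e2 : α 2 * (A 0 0 - A 1 0) + α 0 * (A 2 2 - A 0 2) = 0 :=
    fac _ _ _ (hα 0) (hα 2) (by linear_combination E2 - α 0 * α 2 ^ 2 * h21)
  have e3 : α 2 * (A 0 1 - A 1 1) + α 1 * (A 0 2 - A 2 2) = 0 :=
    fac _ _ _ (hα 1) (hα 2) (by linear_combination -E3 + α 1 * α 2 ^ 2 * h12 - α 1 ^ 2 * α 2 * h23)
  have huw : α 0 * ((A 0 1 - A 1 1) * (A 0 2 - A 2 2)) * 2 = 0 := by
    linear_combination -((A 0 2 - A 2 2) * e1 + (A 0 1 - A 1 1) * e2 - (A 0 0 - A 1 0) * e3)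
  have huw2 : (A 0 1 - A 1 1) * (A 0 2 - A 2 2) = 0 := by
    have h := mul_eq_zero.mp huw
    rcases h with h | h
    · rcases mul_eq_zero.mp h with h | h
      · exact absurd h (hα 0)
      · exact h
    · norm_num at h
  linear_combination (A 0 0 - A 1 0) * huw2
end

section
/- For the 2-component Lotka-Volterra system dx_1/dt = x_1(a_1 x_1 + a_2 x_2), dx_2/dt = x_2(a_3 x_1 + a_4 x_2) on the region x_1, x_2 > 0 with P = (a_3 − a_1)x_1 + (a_4 − a_2)x_2 > 0, the function H = x_1^{a_4(a_3−a_1)} · x_2^{a_1(a_2−a_4)} · P^{a_1 a_4 − a_2 a_3} is a first integral: its Lie derivative along the vector field is zero. -/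
/-!
Write `H = x₁^α x₂^β P^γ`. Each factor `g` is a Darboux function of the vector field, i.e. its
derivative along the field is `K g` for a linear cofactor `K`: the cofactors are `a₁x₁ + a₂x₂`,
`a₃x₁ + a₄x₂` and `a₁x₁ + a₄x₂`. Hence the derivative of `H` along the field is
`H (αK₁ + βK₂ + γK₃)`, and the exponents are exactly those that make this combination of cofactors
vanish identically.
-/

open MvPolynomial

open Finset ContinuousLinearMap

theorem HasFDerivAt.finsetProd_rpow_const {ι E : Type*} [NormedAddCommGroup E] [NormedSpace ℝ E]
    {u : Finset ι} {f : ι → E → ℝ} {f' : ι → E →L[ℝ] ℝ} {x : E} (p : ι → ℝ)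
    (hf : ∀ i ∈ u, HasFDerivAt (f i) (f' i) x) (hpos : ∀ i ∈ u, 0 < f i x) :
    HasFDerivAt (fun y => ∏ i ∈ u, f i y ^ p i)
      ((∏ i ∈ u, f i x ^ p i) • ∑ i ∈ u, (p i / f i x) • f' i) x := by
  classical
  refine (HasFDerivAt.finsetProd fun i hi =>
    (hf i hi).rpow_const (p := p i) (.inl (hpos i hi).ne')).congr_fderiv ?_
  rw [smul_sum]
  refine sum_congr rfl fun i hi => ?_
  rw [smul_smul, smul_smul, ← mul_prod_erase u (fun j => f j x ^ p j) hi,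
    Real.rpow_sub_one (hpos i hi).ne']
  ring_nf

theorem lotkaVolterra_darboux_linear (a1 a2 a3 a4 x0 x1 : ℝ) :
    (a3 - a1) * (x0 * (a1 * x0 + a2 * x1)) + (a4 - a2) * (x1 * (a3 * x0 + a4 * x1)) =
      ((a3 - a1) * x0 + (a4 - a2) * x1) * (a1 * x0 + a4 * x1) := by
  ring

theorem lotkaVolterra_cofactor_combination_eq_zero (a1 a2 a3 a4 x0 x1 : ℝ) :
    a4 * (a3 - a1) * (a1 * x0 + a2 * x1) + a1 * (a2 - a4) * (a3 * x0 + a4 * x1) +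
      (a1 * a4 - a2 * a3) * (a1 * x0 + a4 * x1) = 0 := by
  ring

/-- For the 2-component LV system, the function
`H = x_1^{a_4(a_3-a_1)} x_2^{a_1(a_2-a_4)} P^{a_1 a_4 - a_2 a_3}` with
`P = (a_3-a_1)x_1 + (a_4-a_2)x_2` is a first integral on the region where
`x_1, x_2, P > 0`. -/
theorem twoComponent_first_integral (a1 a2 a3 a4 : ℝ) (x : Fin 2 → ℝ)
    (hx0 : 0 < x 0) (hx1 : 0 < x 1)
    (hP : 0 < (a3 - a1) * x 0 + (a4 - a2) * x 1) :
    fderiv ℝ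
      (fun y : Fin 2 → ℝ =>
        (y 0) ^ (a4 * (a3 - a1)) * (y 1) ^ (a1 * (a2 - a4)) *
          ((a3 - a1) * y 0 + (a4 - a2) * y 1) ^ (a1 * a4 - a2 * a3)) x
      ![x 0 * (a1 * x 0 + a2 * x 1), x 1 * (a3 * x 0 + a4 * x 1)] = 0 := by
  set L : (Fin 2 → ℝ) →L[ℝ] ℝ := (a3 - a1) • proj 0 + (a4 - a2) • proj 1
  have hderiv : ∀ i ∈ univ, HasFDerivAt
      (![fun y => y 0, fun y => y 1, fun y => (a3 - a1) * y 0 + (a4 - a2) * y 1] i)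
      (![proj 0, proj 1, L] i) x := by
    intro i _
    fin_cases i
    exacts [hasFDerivAt_apply 0 x, hasFDerivAt_apply 1 x, L.hasFDerivAt]
  have hpos : ∀ i ∈ univ,
      0 < ![fun y => y 0, fun y => y 1, fun y => (a3 - a1) * y 0 + (a4 - a2) * y 1] i x := by
    intro i _
    fin_cases i <;> simpa
  have hH := HasFDerivAt.finsetProd_rpow_const
    ![a4 * (a3 - a1), a1 * (a2 - a4), a1 * a4 - a2 * a3] hderiv hpos
  simp only [Fin.prod_univ_three, Fin.sum_univ_three, Matrix.cons_val_zero, Matrix.cons_val_one,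
    Matrix.cons_val_two, Matrix.tail_cons, Matrix.head_cons] at hH
  have hLv : L ![x 0 * (a1 * x 0 + a2 * x 1), x 1 * (a3 * x 0 + a4 * x 1)] =
      ((a3 - a1) * x 0 + (a4 - a2) * x 1) * (a1 * x 0 + a4 * x 1) :=
    lotkaVolterra_darboux_linear a1 a2 a3 a4 (x 0) (x 1)
  rw [hH.fderiv, smul_apply]
  refine smul_eq_zero_of_right _ ?_
  simp only [add_apply, smul_apply, proj_apply, smul_eq_mul, Matrix.cons_val_zero,
    Matrix.cons_val_one]
  rw [mul_comm_div _ _ (L _), hLv, mul_div_cancel_left₀ _ hP.ne']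
  field_simp
  linear_combination lotkaVolterra_cofactor_combination_eq_zero a1 a2 a3 a4 (x 0) (x 1)
end

section
/- For the 3-component tree-system dx_1/dt = x_1(a_1 x_1 + b_1 x_2 + b_2 x_3), dx_2/dt = x_2(c_1 x_1 + a_2 x_2 + b_2 x_3), dx_3/dt = x_3(c_1 x_1 + c_2 x_2 + a_3 x_3), the polynomials P_1 = (c_1 − a_1)x_1 + (a_2 − b_1)x_2 and P_2 = (c_2 − a_2)x_2 + (a_3 − b_2)x_3 are both Darboux polynomials, with cofactors a_1 x_1 + a_2 x_2 + b_2 x_3 and c_1 x_1 + a_2 x_2 + a_3 x_3 respectively. -/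
open MvPolynomial

/-- For the 3-component tree-system, the polynomials
`P_1 = (c_1-a_1)x_1 + (a_2-b_1)x_2` and `P_2 = (c_2-a_2)x_2 + (a_3-b_2)x_3`
are Darboux polynomials with the indicated cofactors. -/
theorem tree_system_DPs (a1 a2 a3 b1 b2 c1 c2 : ℝ) :
    lieDeriv (LV (!![a1, b1, b2; c1, a2, b2; c1, c2, a3] :
          Matrix (Fin 3) (Fin 3) ℝ) 0)
        (C (c1 - a1) * X 0 + C (a2 - b1) * X 1) =
      (C a1 * X 0 + C a2 * X 1 + C b2 * X 2) *
        (C (c1 - a1) * X 0 + C (a2 - b1) * X 1) ∧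
    lieDeriv (LV (!![a1, b1, b2; c1, a2, b2; c1, c2, a3] :
          Matrix (Fin 3) (Fin 3) ℝ) 0)
        (C (c2 - a2) * X 1 + C (a3 - b2) * X 2) =
      (C c1 * X 0 + C a2 * X 1 + C a3 * X 2) *
        (C (c2 - a2) * X 1 + C (a3 - b2) * X 2) := by
  constructor <;>
  · simp only [lieDeriv, LV, Fin.sum_univ_three, map_add, map_mul, pderiv_X, pderiv_C,
      Matrix.cons_val', Matrix.cons_val_zero, Matrix.cons_val_one, Matrix.head_cons,
      Matrix.cons_val_two, Matrix.tail_cons, Matrix.empty_val', Matrix.cons_val_fin_one,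
      Matrix.head_fin_const, Pi.zero_apply, map_zero, map_sub]
    simp [Pi.single_apply, Matrix.vecHead, Matrix.vecTail]
    ring
end

section
/- Let T be a tree on the index set I = {i_1,…,i_m} (a set of m−1 edges connecting all of I), and suppose the matrix A satisfies (A_{x,y}−A_{y,y})(A_{x,x}−A_{y,x}) ≠ 0 for every edge {x,y} ∈ T. Fix h ∈ {1,…,m} and α_h ≠ 0, and define α_j = α_h · ∏_{{x,y}∈T_{i_h,i_j}} (A_{x,y}−A_{y,y})/(A_{x,x}−A_{y,x}), where T_{i_h,i_j} is the unique path in T from i_h to i_j. Then all α_j are nonzero, and for every edge {i_u,i_v} ∈ T the relation α_u(A_{i_u,i_v}−A_{i_v,i_v}) = α_v(A_{i_u,i_u}−A_{i_v,i_u}) holds. -/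
/-!
The ratio of the reversed edge `(y, x)` is the reciprocal of that of `(x, y)`, so the path
products from `i_h` form a multiplicative potential on the tree: stepping from `u` to an adjacent
`w` multiplies `α` by the ratio of `(u, w)`, whichever of the two paths is the longer one. That
step rule is the edge relation with the denominator cleared.
-/

open MvPolynomial

namespace SimpleGraph

variable {V : Type*} {G : SimpleGraph V}

/-- In a forest the paths from a common root to two adjacent vertices differ by exactly that
edge, traversed in one direction or the other; `hf` makes both directions give the same factor. -/
theorem IsAcyclic.prod_darts_map_of_adj {M : Type*} [CommMonoid M] (hG : G.IsAcyclic)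
    (f : G.Dart → M) (hf : ∀ d, f d.symm * f d = 1) {r u w : V} {p : G.Walk r u}
    {q : G.Walk r w} (hp : p.IsPath) (hq : q.IsPath) (huw : G.Adj u w) :
    (q.darts.map f).prod = (p.darts.map f).prod * f ⟨(u, w), huw⟩ := by
  by_cases hu : u ∈ q.support
  · rw [hG.path_concat hp hq huw hu, Walk.darts_concat, List.map_concat, List.prod_concat]
  · have hw := hG.mem_support_of_ne_mem_support_of_adj_of_isPath hp hq huw hu
    rw [hG.path_concat hq hp huw.symm hw, Walk.darts_concat, List.map_concat, List.prod_concat,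
      mul_assoc]
    change _ = _ * (f (Dart.symm ⟨(u, w), huw⟩) * _)
    rw [hf, mul_one]

end SimpleGraph

section EdgeRatio

variable {ι K : Type*} [Field K] (A : Matrix ι ι K)

def edgeRatio (x y : ι) : K := (A x y - A y y) / (A x x - A y x)

variable {A}

theorem edgeRatio_swap_mul_edgeRatio {x y : ι}
    (hxy : (A x y - A y y) * (A x x - A y x) ≠ 0) :
    edgeRatio A y x * edgeRatio A x y = 1 := by
  have hl : A y y - A x y ≠ 0 := sub_ne_zero.mpr (sub_ne_zero.mp (left_ne_zero_of_mul hxy)).symm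
  unfold edgeRatio
  rw [div_mul_div_comm, div_eq_one_iff_eq (mul_ne_zero hl (right_ne_zero_of_mul hxy))]
  ring

theorem mul_sub_eq_of_eq_mul_edgeRatio {x y : ι} {a b : K} (hxy : A x x - A y x ≠ 0)
    (hb : b = a * edgeRatio A x y) :
    a * (A x y - A y y) = b * (A x x - A y x) := by
  rw [hb, edgeRatio, mul_assoc, div_mul_cancel₀ _ hxy]

end EdgeRatio

theorem tree_general_solution_general {n m : ℕ} (A : Matrix (Fin n) (Fin n) ℝ)
    (v : Fin m → Fin n)
    (G : SimpleGraph (Fin m)) (hG : G.IsTree)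
    (hnd : ∀ u w, G.Adj u w →
      (A (v u) (v w) - A (v w) (v w)) * (A (v u) (v u) - A (v w) (v u)) ≠ 0)
    (h : Fin m) (αh : ℝ) (hαh : αh ≠ 0) (α : Fin m → ℝ)
    (hα : ∀ j, α j = αh *
      ((((SimpleGraph.isTree_iff_existsUnique_path.mp hG).2 h j).choose.darts.map
        (fun d => (A (v d.fst) (v d.snd) - A (v d.snd) (v d.snd)) /
          (A (v d.fst) (v d.fst) - A (v d.snd) (v d.fst))))).prod) :
    (∀ j, α j ≠ 0) ∧
      ∀ u w, G.Adj u w →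
        α u * (A (v u) (v w) - A (v w) (v w)) =
          α w * (A (v u) (v u) - A (v w) (v u)) := by
  let path := fun j => ((SimpleGraph.isTree_iff_existsUnique_path.mp hG).2 h j).choose
  have path_isPath j : (path j).IsPath :=
    ((SimpleGraph.isTree_iff_existsUnique_path.mp hG).2 h j).choose_spec.1
  let f : G.Dart → ℝ := fun d => edgeRatio A (v d.fst) (v d.snd)
  have hf d : f d.symm * f d = 1 := edgeRatio_swap_mul_edgeRatio (hnd _ _ d.adj)
  have hα' j : α j = αh * ((path j).darts.map f).prod := hα j
  refine ⟨fun j => ?_, fun u w huw => ?_⟩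
  · rw [hα' j]
    refine mul_ne_zero hαh (List.prod_ne_zero fun h0 => ?_)
    obtain ⟨d, -, hd⟩ := List.mem_map.mp h0
    exact right_ne_zero_of_mul_eq_one (hf d) hd
  · refine mul_sub_eq_of_eq_mul_edgeRatio (right_ne_zero_of_mul (hnd u w huw)) ?_
    rw [hα' u, hα' w, hG.isAcyclic.prod_darts_map_of_adj f hf (path_isPath u) (path_isPath w) huw,
      mul_assoc]

/-- Prop. 2 (general solution): given a tree `T` on the index set
`I = {v 0, …, v (m-1)}` with nondegenerate edges, the coefficients `α_j`
defined as products of ratios along the unique path from `i_h` to `i_j`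
are all nonzero and satisfy the edge relations (C3). -/
theorem tree_general_solution {n m : ℕ} (A : Matrix (Fin n) (Fin n) ℝ)
    (v : Fin m → Fin n) (hv : Function.Injective v)
    (G : SimpleGraph (Fin m)) (hG : G.IsTree)
    (hnd : ∀ u w, G.Adj u w →
      (A (v u) (v w) - A (v w) (v w)) * (A (v u) (v u) - A (v w) (v u)) ≠ 0)
    (h : Fin m) (αh : ℝ) (hαh : αh ≠ 0) (α : Fin m → ℝ)
    (hα : ∀ j, α j = αh *
      ((((SimpleGraph.isTree_iff_existsUnique_path.mp hG).2 h j).choose.darts.map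
        (fun d => (A (v d.fst) (v d.snd) - A (v d.snd) (v d.snd)) /
          (A (v d.fst) (v d.fst) - A (v d.snd) (v d.fst))))).prod) :
    (∀ j, α j ≠ 0) ∧
      ∀ u w, G.Adj u w →
        α u * (A (v u) (v w) - A (v w) (v w)) =
          α w * (A (v u) (v u) - A (v w) (v u)) :=
  tree_general_solution_general A v G hG hnd h αh hαh α hα
end
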